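/- For every s ∈ ℕ with s ≥ 1, there are at least 2^{2^{s−1}} − 1 pairwise non-isomorphic indecomposable non-degenerate involutive solutions of the Yang–Baxter equation of multipermutation level at most 2 of size n = 2^s. -/

import Mathlib

/-- The map `r(x,y) = (σ_x(y), τ_y(x))` associated to a solution. -/
def rmapP {X : Type*} (σ τ : X → Equiv.Perm X) : X × X → X × X :=
  fun p => (σ p.1 p.2, τ p.2 p.1)

/-- `r × id` acting on `X × X × X`. -/
def r12P {X : Type*} (σ τ : X → Equiv.Perm X) : X × X × X → X × X × X :=
  fun t => (σ t.1 t.2.1, τ t.2.1 t.1, t.2.2)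

/-- `id × r` acting on `X × X × X`. -/
def r23P {X : Type*} (σ τ : X → Equiv.Perm X) : X × X × X → X × X × X :=
  fun t => (t.1, σ t.2.1 t.2.2, τ t.2.2 t.2.1)

/-- A non-degenerate involutive set-theoretic solution of the Yang–Baxter equation. -/
structure YBSol (X : Type*) where
  σ : X → Equiv.Perm X
  τ : X → Equiv.Perm X
  invol : ∀ p : X × X, rmapP σ τ (rmapP σ τ p) = p
  braid : ∀ t : X × X × X,
    r12P σ τ (r23P σ τ (r12P σ τ t)) = r23P σ τ (r12P σ τ (r23P σ τ t))

/-- The permutation group `G(X)` of a solution. -/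
def YBSol.G {X : Type*} (S : YBSol X) : Subgroup (Equiv.Perm X) :=
  Subgroup.closure (Set.range S.σ)

/-- The displacement group `Dis(X)` of a solution. -/
def YBSol.Dis {X : Type*} (S : YBSol X) : Subgroup (Equiv.Perm X) :=
  Subgroup.closure {g | ∃ x y : X, g = S.σ x * (S.σ y)⁻¹}

/-- Multipermutation level at most `2`. -/
def YBSol.MPL2 {X : Type*} (S : YBSol X) : Prop :=
  ∀ x y z : X, S.σ (S.σ y x) = S.σ (S.σ z x)

/-- Indecomposability: the permutation group acts transitively. -/
def YBSol.Indec {X : Type*} (S : YBSol X) : Prop :=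
  ∀ x y : X, ∃ g ∈ S.G, g x = y

/-- Isomorphism of solutions on the same carrier. -/
def SolIso {X : Type*} (S T : YBSol X) : Prop :=
  ∃ Φ : Equiv.Perm X, ∀ x y : X, Φ (S.σ x y) = T.σ (Φ x) (Φ y)


section Family

variable {m : ℕ}

/-- carrier of the family solutions -/
abbrev Mc (m : ℕ) : Type := ZMod m × ZMod 2

def famσ (φ ψ : ZMod m → ZMod 2) (x : Mc m) : Equiv.Perm (Mc m) where
  toFun y := (y.1 + 1, y.2 + φ (x.1 - y.1) + ψ y.1)
  invFun y := (y.1 - 1, y.2 - φ (x.1 - y.1 + 1) - ψ (y.1 - 1))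
  left_inv y := by
    have h : x.1 - (y.1 + 1) + 1 = x.1 - y.1 := by ring
    refine Prod.ext (by simp) ?_
    simp only [h]
    ring_nf
  right_inv y := by
    have h : x.1 - (y.1 - 1) = x.1 - y.1 + 1 := by ring
    refine Prod.ext (by simp) ?_
    simp only [h]
    ring_nf

def famτ (φ ψ : ZMod m → ZMod 2) (y : Mc m) : Equiv.Perm (Mc m) where
  toFun x := (x.1 - 1, x.2 - φ (y.1 - x.1 + 2) - ψ (x.1 - 1))
  invFun x := (x.1 + 1, x.2 + φ (y.1 - x.1 + 1) + ψ x.1)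
  left_inv x := by
    have h : y.1 - (x.1 - 1) + 1 = y.1 - x.1 + 2 := by ring
    refine Prod.ext (by simp) ?_
    simp only [h]
    ring_nf
  right_inv x := by
    have h : y.1 - (x.1 + 1) + 2 = y.1 - x.1 + 1 := by ring
    refine Prod.ext (by simp) ?_
    simp only [h]
    ring_nf

def famSol (φ ψ : ZMod m → ZMod 2) : YBSol (Mc m) where
  σ := famσ φ ψ
  τ := famτ φ ψ
  invol := by
    rintro ⟨⟨a, u⟩, b, v⟩
    simp only [rmapP, famσ, famτ, Equiv.coe_fn_mk]
    refine Prod.ext (Prod.ext (by push_cast; ring) ?_) (Prod.ext (by push_cast; ring) ?_) <;>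
      · simp only []
        ring_nf
  braid := by
    rintro ⟨⟨a, u⟩, ⟨b, v⟩, c, w⟩
    simp only [r12P, r23P, famσ, famτ, Equiv.coe_fn_mk]
    refine Prod.ext (Prod.ext (by push_cast; ring) ?_)
      (Prod.ext (Prod.ext (by push_cast; ring) ?_) (Prod.ext (by push_cast; ring) ?_)) <;>
      · simp only []
        ring_nf

end Family

section Part2

variable {m : ℕ}

theorem famSol_mpl2 (φ ψ : ZMod m → ZMod 2) : (famSol φ ψ).MPL2 := by
  intro x y z
  refine Equiv.ext fun w => ?_
  simp [famSol, famσ]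

theorem zmod2_cases : ∀ t : ZMod 2, t = 0 ∨ t = 1 := by decide
theorem zmod2_ne' : ∀ t u : ZMod 2, t ≠ u → t = u + 1 := by decide
theorem zmod2_ne (t u : ZMod 2) (h : t ≠ u) : t = u + 1 := zmod2_ne' t u h

/-- one step of the walk: from x we can reach (x.1+1, v) for arbitrary v. -/
theorem fam_step (φ ψ : ZMod m → ZMod 2) {d : ZMod m} (h0 : φ 0 = 0) (hd : φ d = 1)
    (x : Mc m) (v : ZMod 2) :
    ∃ g ∈ (famSol φ ψ).G, g x = (x.1 + 1, v) := by
  by_cases ht : v - x.2 - ψ x.1 = 0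
  · refine ⟨famσ φ ψ (x.1, 0), Subgroup.subset_closure ⟨(x.1, 0), rfl⟩, ?_⟩
    simp only [famσ, Equiv.coe_fn_mk, sub_self, h0]
    refine Prod.ext rfl ?_
    simp only
    linear_combination -ht
  · have ht1 : v - x.2 - ψ x.1 = 1 := zmod2_ne _ _ ht
    refine ⟨famσ φ ψ (x.1 + d, 0), Subgroup.subset_closure ⟨(x.1 + d, 0), rfl⟩, ?_⟩
    simp only [famσ, Equiv.coe_fn_mk, add_sub_cancel_left, hd]
    refine Prod.ext rfl ?_
    simp only
    linear_combination -ht1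

theorem fam_walk (φ ψ : ZMod m → ZMod 2) {d : ZMod m} (h0 : φ 0 = 0) (hd : φ d = 1)
    (k : ℕ) (hk : 1 ≤ k) (x : Mc m) (v : ZMod 2) :
    ∃ g ∈ (famSol φ ψ).G, g x = (x.1 + (k : ZMod m), v) := by
  induction k with
  | zero => omega
  | succ k ih =>
    rcases Nat.lt_or_ge k 1 with h1 | h2
    · obtain ⟨g, hg, hgx⟩ := fam_step φ ψ h0 hd x v
      have hk0 : k = 0 := by omega
      subst hk0
      refine ⟨g, hg, ?_⟩
      rw [hgx]; push_cast; ring_nf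
    · obtain ⟨g, hg, hgx⟩ := ih h2
      obtain ⟨g', hg', hgx'⟩ := fam_step φ ψ h0 hd (x.1 + (k : ZMod m), v) v
      refine ⟨g' * g, mul_mem hg' hg, ?_⟩
      simp only [Equiv.Perm.mul_apply, hgx, hgx']
      refine Prod.ext ?_ rfl
      push_cast; ring

theorem famSol_indec [NeZero m] (φ ψ : ZMod m → ZMod 2) {d : ZMod m}
    (h0 : φ 0 = 0) (hd : φ d = 1) : (famSol φ ψ).Indec := by
  intro x y
  by_cases h : y.1 = x.1
  · obtain ⟨g, hg, hgx⟩ := fam_walk φ ψ h0 hd m (Nat.one_le_iff_ne_zero.mpr (NeZero.ne m)) x y.2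
    refine ⟨g, hg, ?_⟩
    rw [hgx, ZMod.natCast_self, add_zero, ← h]
  · have hk : 1 ≤ (y.1 - x.1).val := by
      refine Nat.one_le_iff_ne_zero.mpr fun hc => ?_
      exact (sub_ne_zero.mpr h) ((ZMod.val_eq_zero _).mp hc)
    obtain ⟨g, hg, hgx⟩ := fam_walk φ ψ h0 hd (y.1 - x.1).val hk x y.2
    refine ⟨g, hg, ?_⟩
    rw [hgx, ZMod.natCast_val, ZMod.cast_id]
    refine Prod.ext (by simp only; ring) rfl

/-- the cyclic permutation solution on `ZMod n`. -/
def cycSol (n : ℕ) : YBSol (ZMod n) where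
  σ _ := Equiv.addRight 1
  τ _ := Equiv.subRight 1
  invol p := by simp [rmapP]
  braid t := by
    refine Prod.ext ?_ (Prod.ext ?_ ?_) <;> simp [r12P, r23P] <;> ring

theorem cycSol_mpl2 (n : ℕ) : (cycSol n).MPL2 := fun _ _ _ => rfl

theorem cycSol_indec (n : ℕ) [NeZero n] : (cycSol n).Indec := by
  have key : ∀ (x : ZMod n) (k : ℕ), ∃ g ∈ (cycSol n).G, g x = x + (k : ℕ) := by
    intro x k
    induction k with
    | zero => exact ⟨1, one_mem _, by simp⟩
    | succ k ih =>
      obtain ⟨g, hg, hgx⟩ := ih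
      refine ⟨Equiv.addRight 1 * g, mul_mem (Subgroup.subset_closure ⟨0, rfl⟩) hg, ?_⟩
      simp only [Equiv.Perm.mul_apply, hgx, Equiv.coe_addRight]
      push_cast; ring
  intro x y
  obtain ⟨g, hg, hgx⟩ := key x (y - x).val
  exact ⟨g, hg, by rw [hgx, ZMod.natCast_val, ZMod.cast_id]; ring⟩

theorem cycSol_allEq (n : ℕ) : ∀ x y : ZMod n, (cycSol n).σ x = (cycSol n).σ y :=
  fun _ _ => rfl

theorem famSol_not_allEq (φ ψ : ZMod m → ZMod 2) {d : ZMod m}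
    (h0 : φ 0 = 0) (hd : φ d = 1) :
    ¬ (∀ x y : Mc m, (famSol φ ψ).σ x = (famSol φ ψ).σ y) := by
  intro h
  have h1 : (famSol φ ψ).σ (d, 0) (0, 0) = (famSol φ ψ).σ (0, 0) (0, 0) := by
    rw [h (d, 0) (0, 0)]
  simp only [famSol, famσ, Equiv.coe_fn_mk, sub_zero, h0, hd] at h1
  have h2 := (Prod.ext_iff.mp h1).2
  simp only at h2
  exact one_ne_zero (by linear_combination h2 : (1 : ZMod 2) = 0)

end Part2

section Part3

variable {m : ℕ}

theorem fam_iso_eq [NeZero m] (φ φ' : ZMod m → ZMod 2) (ε ε' : ZMod 2)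
    (h0 : φ 0 = 0) (h0' : φ' 0 = 0) {d : ZMod m} (hd : φ d = 1)
    (h : SolIso (famSol φ (fun b => if b = 0 then ε else 0))
      (famSol φ' (fun b => if b = 0 then ε' else 0))) :
    φ = φ' ∧ ε = ε' := by
  set ψ : ZMod m → ZMod 2 := fun b => if b = 0 then ε else 0 with hψ
  set ψ' : ZMod m → ZMod 2 := fun b => if b = 0 then ε' else 0 with hψ'
  obtain ⟨Φ, hΦ⟩ := h
  have key : ∀ (a : ZMod m) (u : ZMod 2) (b : ZMod m) (v : ZMod 2),
      Φ (b + 1, v + φ (a - b) + ψ b) =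
        ((Φ (b, v)).1 + 1,
          (Φ (b, v)).2 + φ' ((Φ (a, u)).1 - (Φ (b, v)).1) + ψ' (Φ (b, v)).1) := by
    intro a u b v
    have := hΦ (a, u) (b, v)
    simpa [famSol, famσ] using this
  have keyB : ∀ (a b : ZMod m) (v : ZMod 2),
      (Φ (b + 1, v + φ (a - b) + ψ b)).1 = (Φ (b, v)).1 + 1 := by
    intro a b v
    exact congrArg Prod.fst (key a 0 b v)
  -- first coordinate of Φ does not depend on the second input coordinate
  have hBv : ∀ (b : ZMod m) (w : ZMod 2), (Φ (b + 1, w)).1 = (Φ (b + 1, w + 1)).1 := by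
    intro b w
    have e1 := keyB b b (w - ψ b)
    rw [show (b : ZMod m) - b = 0 from sub_self b, h0,
      show w - ψ b + 0 + ψ b = w from by ring] at e1
    have e2 := keyB (b + d) b (w - ψ b)
    rw [show (b : ZMod m) + d - b = d from by ring, hd,
      show w - ψ b + 1 + ψ b = w + 1 from by ring] at e2
    exact e1.trans e2.symm
  have hB : ∀ (b : ZMod m) (v w : ZMod 2), (Φ (b, v)).1 = (Φ (b, w)).1 := by
    have hB1 : ∀ (b : ZMod m) (w : ZMod 2), (Φ (b, w)).1 = (Φ (b, w + 1)).1 := by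
      intro b w
      have := hBv (b - 1) w
      rwa [sub_add_cancel] at this
    intro b v w
    rcases zmod2_cases (w - v) with hw | hw
    · rw [show w = v from by linear_combination hw]
    · rw [show w = v + 1 from by linear_combination hw]
      exact hB1 b v
  set β : ZMod m → ZMod m := fun b => (Φ (b, 0)).1 with hβdef
  have hβ : ∀ (b : ZMod m) (v : ZMod 2), (Φ (b, v)).1 = β b := fun b v => hB b v 0
  have hβstep : ∀ b : ZMod m, β (b + 1) = β b + 1 := by
    intro b
    have e := keyB b b 0
    rw [hβ, hβ] at e
    exact e
  have hβlin : ∀ b : ZMod m, β b = b + β 0 := by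
    have hn : ∀ n : ℕ, β ((n : ZMod m)) = (n : ZMod m) + β 0 := by
      intro n
      induction n with
      | zero => simp
      | succ n ih =>
        push_cast
        rw [hβstep, ih]
        ring
    intro b
    have := hn b.val
    rwa [ZMod.natCast_val, ZMod.cast_id] at this
  set t : ZMod m := β 0 with htdef
  set χ : ZMod m → ZMod 2 := fun b => (Φ (b, 0)).2 with hχdef
  have hCinj : ∀ b : ZMod m, (Φ (b, 1)).2 ≠ (Φ (b, 0)).2 := by
    intro b heq
    have : Φ (b, 1) = Φ (b, 0) := Prod.ext (hB b 1 0) heq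
    have := Φ.injective this
    have h10 := (Prod.ext_iff.mp this).2
    exact one_ne_zero h10
  have hC : ∀ (b : ZMod m) (v : ZMod 2), (Φ (b, v)).2 = v + χ b := by
    intro b v
    rcases zmod2_cases v with hv | hv
    · rw [hv, zero_add]
    · rw [hv]
      have := zmod2_ne _ _ (hCinj b)
      rw [this]; ring
  have E : ∀ (a b : ZMod m) (v : ZMod 2),
      v + φ (a - b) + ψ b + χ (b + 1) = v + χ b + φ' (a - b) + ψ' (b + t) := by
    intro a b v
    have e := congrArg Prod.snd (key a 0 b v)
    simp only at e
    rw [hC, hC, hβ, hβ, hβlin a, hβlin b,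
      show a + β 0 - (b + β 0) = a - b from by ring] at e
    linear_combination e
  have hstar : ∀ b : ZMod m, ψ b + χ (b + 1) = χ b + ψ' (b + t) := by
    intro b
    have e := E b b 0
    rw [show (b : ZMod m) - b = 0 from sub_self b, h0, h0'] at e
    linear_combination e
  constructor
  · funext c
    have e1 := E c 0 0
    rw [sub_zero] at e1
    have e2 := hstar 0
    linear_combination e1 - e2
  · have hsum := Finset.sum_congr rfl (fun b (_ : b ∈ Finset.univ) => hstar b)
    rw [Finset.sum_add_distrib, Finset.sum_add_distrib] at hsum
    have c1 : ∑ b : ZMod m, χ (b + 1) = ∑ b : ZMod m, χ b :=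
      Fintype.sum_equiv (Equiv.addRight (1 : ZMod m)) _ _ (fun b => rfl)
    have c2 : ∑ b : ZMod m, ψ' (b + t) = ∑ b : ZMod m, ψ' b :=
      Fintype.sum_equiv (Equiv.addRight t) _ _ (fun b => rfl)
    have c3 : ∑ b : ZMod m, ψ b = ε := by
      rw [hψ]
      rw [Finset.sum_ite_eq' Finset.univ (0 : ZMod m) (fun _ => ε)]
      simp
    have c4 : ∑ b : ZMod m, ψ' b = ε' := by
      rw [hψ']
      rw [Finset.sum_ite_eq' Finset.univ (0 : ZMod m) (fun _ => ε')]
      simp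
    rw [c1, c2, c3, c4] at hsum
    linear_combination hsum

end Part3

section Transport

variable {X Y : Type*}

/-- permCongr as a monoid hom -/
def permCongrHom (e : X ≃ Y) : Equiv.Perm X →* Equiv.Perm Y where
  toFun f := e.permCongr f
  map_one' := by ext y; simp
  map_mul' f g := by ext y; simp

@[simp] theorem permCongrHom_apply (e : X ≃ Y) (f : Equiv.Perm X) (y : Y) :
    permCongrHom e f y = e (f (e.symm y)) := rfl

/-- transport of a solution along an equivalence of carriers -/
def YBSol.map (e : X ≃ Y) (S : YBSol X) : YBSol Y where
  σ y := permCongrHom e (S.σ (e.symm y))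
  τ y := permCongrHom e (S.τ (e.symm y))
  invol p := by
    have h := S.invol (e.symm p.1, e.symm p.2)
    simp only [rmapP, Prod.mk.injEq] at h ⊢
    simp only [permCongrHom_apply, Equiv.symm_apply_apply, h.1, h.2,
      Equiv.apply_symm_apply, and_self]
  braid t := by
    have h := S.braid (e.symm t.1, e.symm t.2.1, e.symm t.2.2)
    simp only [r12P, r23P, Prod.mk.injEq] at h ⊢
    simp only [permCongrHom_apply, Equiv.symm_apply_apply, h.1, h.2.1, h.2.2,
      Equiv.apply_symm_apply, and_self]

theorem YBSol.map_G (e : X ≃ Y) (S : YBSol X) {g : Equiv.Perm X} (hg : g ∈ S.G) :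
    permCongrHom e g ∈ (S.map e).G := by
  have hsub : (S.G).map (permCongrHom e) ≤ (S.map e).G := by
    rw [YBSol.G, MonoidHom.map_closure]
    refine Subgroup.closure_mono ?_
    rintro _ ⟨_, ⟨x, rfl⟩, rfl⟩
    exact ⟨e x, by simp [YBSol.map]⟩
  exact hsub ⟨g, hg, rfl⟩

theorem YBSol.map_indec (e : X ≃ Y) (S : YBSol X) (h : S.Indec) : (S.map e).Indec := by
  intro x y
  obtain ⟨g, hg, hgx⟩ := h (e.symm x) (e.symm y)
  refine ⟨permCongrHom e g, YBSol.map_G e S hg, ?_⟩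
  simp [hgx]

theorem YBSol.map_mpl2 (e : X ≃ Y) (S : YBSol X) (h : S.MPL2) : (S.map e).MPL2 := by
  intro x y z
  show permCongrHom e _ = permCongrHom e _
  simp only [YBSol.map, permCongrHom_apply, Equiv.symm_apply_apply]
  rw [h (e.symm x) (e.symm y) (e.symm z)]

theorem solIso_of_map (e : X ≃ Y) (S T : YBSol X)
    (h : SolIso (S.map e) (T.map e)) : SolIso S T := by
  obtain ⟨Φ, hΦ⟩ := h
  refine ⟨(e.trans Φ).trans e.symm, fun x y => ?_⟩
  have := hΦ (e x) (e y)
  simp only [YBSol.map, permCongrHom_apply, Equiv.symm_apply_apply] at this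
  simp only [Equiv.trans_apply]
  rw [this]
  simp

/-- "all σ equal" is an isomorphism invariant. -/
def AllEq (S : YBSol X) : Prop := ∀ x y : X, S.σ x = S.σ y

theorem allEq_of_iso {S T : YBSol X} (h : SolIso S T) (hS : AllEq S) : AllEq T := by
  obtain ⟨Φ, hΦ⟩ := h
  intro x y
  refine Equiv.ext fun w => ?_
  have h1 := hΦ (Φ.symm x) (Φ.symm w)
  have h2 := hΦ (Φ.symm y) (Φ.symm w)
  rw [Equiv.apply_symm_apply, Equiv.apply_symm_apply] at h1 h2
  rw [← h1, ← h2, hS (Φ.symm x) (Φ.symm y)]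

theorem YBSol.map_allEq (e : X ≃ Y) (S : YBSol X) (h : AllEq S) : AllEq (S.map e) := by
  intro x y
  show permCongrHom e _ = permCongrHom e _
  rw [h (e.symm x) (e.symm y)]

theorem solIso_refl (S : YBSol X) : SolIso S S := ⟨Equiv.refl X, fun _ _ => rfl⟩

theorem solIso_symm {S T : YBSol X} (h : SolIso S T) : SolIso T S := by
  obtain ⟨Φ, hΦ⟩ := h
  refine ⟨Φ.symm, fun x y => Φ.injective ?_⟩
  rw [Equiv.apply_symm_apply, hΦ, Equiv.apply_symm_apply, Equiv.apply_symm_apply]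

theorem solIso_trans {S T U : YBSol X} (h1 : SolIso S T) (h2 : SolIso T U) :
    SolIso S U := by
  obtain ⟨Φ, hΦ⟩ := h1
  obtain ⟨Ψ, hΨ⟩ := h2
  exact ⟨Φ.trans Ψ, fun x y => by simp only [Equiv.trans_apply, hΦ, hΨ]⟩

instance YBSol.finite [Finite X] : Finite (YBSol X) := by
  have : Function.Injective (fun S : YBSol X => (S.σ, S.τ)) := by
    rintro ⟨σ1, τ1, h1, h2⟩ ⟨σ2, τ2, h3, h4⟩ h
    simp only [Prod.mk.injEq] at h
    obtain ⟨rfl, rfl⟩ := h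
    rfl
  exact Finite.of_injective _ this

end Transport

section Assembly

theorem YBSol.allEq_of_map {X Y : Type*} (e : X ≃ Y) (S : YBSol X)
    (h : AllEq (S.map e)) : AllEq S := by
  intro x y
  have q := h (e x) (e y)
  simp only [YBSol.map, Equiv.symm_apply_apply] at q
  refine Equiv.ext fun w => ?_
  have q2 := DFunLike.congr_fun q (e w)
  simp only [permCongrHom_apply, Equiv.symm_apply_apply] at q2
  exact e.injective q2

variable {m : ℕ}

def φof (g : {x : ZMod m // x ≠ 0} → ZMod 2) : ZMod m → ZMod 2 :=
  fun x => if h : x = 0 then 0 else g ⟨x, h⟩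

theorem φof_zero (g : {x : ZMod m // x ≠ 0} → ZMod 2) : φof g 0 = 0 := by
  simp [φof]

theorem φof_exists_one {g : {x : ZMod m // x ≠ 0} → ZMod 2}
    (hg : g ≠ fun _ => 0) : ∃ d, φof g d = 1 := by
  obtain ⟨j, hj⟩ := Function.ne_iff.mp hg
  refine ⟨j.1, ?_⟩
  have : φof g j.1 = g j := by
    simp only [φof, dif_neg j.2]
  rw [this]
  have := zmod2_ne _ _ hj
  rwa [zero_add] at this

theorem φof_injective {g g' : {x : ZMod m // x ≠ 0} → ZMod 2}
    (h : φof g = φof g') : g = g' := by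
  funext j
  have := congrFun h j.1
  simpa only [φof, dif_neg j.2] using this

def ψof (ε : ZMod 2) : ZMod m → ZMod 2 := fun b => if b = 0 then ε else 0

/-- The index type for our family of pairwise non-isomorphic solutions. -/
def famIdx (m : ℕ) : Type :=
  ({g : {x : ZMod m // x ≠ 0} → ZMod 2 // g ≠ fun _ => 0} × ZMod 2) ⊕ Unit

def solOf {n : ℕ} [NeZero m] [NeZero n] (e : Mc m ≃ Fin n) (e2 : ZMod n ≃ Fin n) :
    famIdx m → {S : YBSol (Fin n) // S.Indec ∧ S.MPL2}
  | Sum.inl (g, ε) => ⟨(famSol (φof g.1) (ψof ε)).map e,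
      YBSol.map_indec _ _ (famSol_indec _ _ (φof_zero g.1) (φof_exists_one g.2).choose_spec),
      YBSol.map_mpl2 _ _ (famSol_mpl2 _ _)⟩
  | Sum.inr _ => ⟨(cycSol n).map e2,
      YBSol.map_indec _ _ (cycSol_indec n),
      YBSol.map_mpl2 _ _ (cycSol_mpl2 n)⟩

theorem solOf_injOn {n : ℕ} [NeZero m] [NeZero n] (e : Mc m ≃ Fin n)
    (e2 : ZMod n ≃ Fin n) (i j : famIdx m)
    (hiso : SolIso (solOf e e2 i).1 (solOf e e2 j).1) : i = j := by
  have famNE : ∀ (g : {g : {x : ZMod m // x ≠ 0} → ZMod 2 // g ≠ fun _ => 0}) (ε : ZMod 2),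
      ¬ AllEq ((famSol (φof g.1) (ψof ε)).map e) := by
    intro g ε hAE
    exact famSol_not_allEq (φof g.1) (ψof ε) (φof_zero g.1)
      (φof_exists_one g.2).choose_spec (YBSol.allEq_of_map e _ hAE)
  match i, j with
  | Sum.inl (g, ε), Sum.inl (g', ε') =>
    have h2 := solIso_of_map e _ _ hiso
    have h3 := fam_iso_eq (φof g.1) (φof g'.1) ε ε' (φof_zero g.1) (φof_zero g'.1)
      (φof_exists_one g.2).choose_spec h2
    have hg : g = g' := Subtype.ext (φof_injective h3.1)
    rw [hg, h3.2]
  | Sum.inl (g, ε), Sum.inr u =>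
    exact absurd (allEq_of_iso (solIso_symm hiso)
      (YBSol.map_allEq e2 _ (cycSol_allEq n))) (famNE g ε)
  | Sum.inr u, Sum.inl (g, ε) =>
    exact absurd (allEq_of_iso hiso
      (YBSol.map_allEq e2 _ (cycSol_allEq n))) (famNE g ε)
  | Sum.inr u, Sum.inr u' => rfl

theorem famIdx_card [NeZero m] : Nat.card (famIdx m) = 2 ^ m - 1 := by
  have h1 : Fintype.card {x : ZMod m // x ≠ 0} = m - 1 := by
    rw [Fintype.card_subtype_compl]
    simp [ZMod.card, Fintype.card_subtype_eq]
  have h2 : Fintype.card ({x : ZMod m // x ≠ 0} → ZMod 2) = 2 ^ (m - 1) := by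
    rw [Fintype.card_fun, h1, ZMod.card]
  have h3 : Fintype.card {g : {x : ZMod m // x ≠ 0} → ZMod 2 // g ≠ fun _ => 0}
      = 2 ^ (m - 1) - 1 := by
    rw [Fintype.card_subtype_compl, h2, Fintype.card_subtype_eq]
  rw [famIdx, Nat.card_eq_fintype_card, Fintype.card_sum, Fintype.card_prod, h3,
    ZMod.card]
  have hm : 1 ≤ m := Nat.one_le_iff_ne_zero.mpr (NeZero.ne m)
  have hpow : 2 ^ (m - 1) * 2 = 2 ^ m := by
    rw [← pow_succ]
    congr 1
    omega
  have hp1 : 1 ≤ 2 ^ (m - 1) := Nat.one_le_two_pow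
  simp only [Fintype.card_unit]
  omega


/-- For every `s ≥ 1` there are at least `2^(2^(s−1)) − 1` pairwise non-isomorphic
indecomposable non-degenerate involutive solutions of the Yang–Baxter equation of
multipermutation level at most 2 of size `2^s`. -/
theorem count_solutions_two_power (s : ℕ) (hs : 1 ≤ s) :
    2 ^ 2 ^ (s - 1) - 1 ≤
      Nat.card (Quot (fun S T : {S : YBSol (Fin (2 ^ s)) // S.Indec ∧ S.MPL2} =>
        SolIso S.1 T.1)) := by

  set n := 2 ^ s with hn
  set m := 2 ^ (s - 1) with hm
  haveI : NeZero m := ⟨(pow_pos (by norm_num : (0:ℕ) < 2) _).ne'⟩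
  haveI : NeZero n := ⟨(pow_pos (by norm_num : (0:ℕ) < 2) _).ne'⟩
  have hmn : m * 2 = n := by
    rw [hm, hn, ← pow_succ]
    congr 1
    omega
  have hcard1 : Fintype.card (Mc m) = n := by
    rw [Fintype.card_prod, ZMod.card, ZMod.card, hmn]
  have hcard2 : Fintype.card (ZMod n) = n := ZMod.card n
  set e : Mc m ≃ Fin n := Fintype.equivFinOfCardEq hcard1
  set e2 : ZMod n ≃ Fin n := Fintype.equivFinOfCardEq hcard2
  set r : {S : YBSol (Fin n) // S.Indec ∧ S.MPL2} →
      {S : YBSol (Fin n) // S.Indec ∧ S.MPL2} → Prop :=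
    fun S T => SolIso S.1 T.1 with hr
  have hequiv : Equivalence r :=
    ⟨fun S => solIso_refl S.1, fun h => solIso_symm h, fun h1 h2 => solIso_trans h1 h2⟩
  haveI : Finite {S : YBSol (Fin n) // S.Indec ∧ S.MPL2} := Subtype.finite
  haveI : Finite (Quot r) := Finite.of_surjective _ (Quot.mk_surjective (r := r))
  have hinj : Function.Injective (fun i : famIdx m => Quot.mk r (solOf e e2 i)) := by
    intro i j hij
    have : Relation.EqvGen r (solOf e e2 i) (solOf e e2 j) := Quot.eq.mp hij
    exact solOf_injOn e e2 i j ((hequiv.eqvGen_iff).mp this)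
  have hle := Nat.card_le_card_of_injective _ hinj
  rw [famIdx_card] at hle
  exact hle

end Assembly
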